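/- arXiv:1606.09109 — 3 statements merged into one kernel-verified Lean document; each statement's English description precedes it below -/
import Mathlib

section
/- For every integer k, the matrix ((T S)^k S)^{-1}, where S = [[0,1],[-1,0]] and T = [[1,ℓ],[0,1]] with ℓ = 2 cos(π/q), equals the matrix [[s(k), s(k+1)],[s(k-1), s(k)]], where s(m) = sin(mπ/q)/sin(π/q). -/
/-!
The sequence `s m = sin (m θ) / sin θ` satisfies `s (m + 1) = 2 cos θ · s m - s (m - 1)`, and this
recurrence says precisely that `T S = [[-ℓ, 1], [-1, 0]]` sends
`M m = [[s m, s (m + 1)], [s (m - 1), s m]]` to `-M (m + 1)`. Since `M 0 = S`, induction in both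
directions gives `(T S) ^ k S = (-1) ^ k M k`.
-/

section ThreeTermRecurrence

variable {R : Type*} [CommRing R]

def seqMatrix (s : ℤ → R) (m : ℤ) : Matrix (Fin 2) (Fin 2) R :=
  !![s m, s (m + 1); s (m - 1), s m]

theorem mul_seqMatrix_of_recurrence {ℓ : R} {s : ℤ → R}
    (hrec : ∀ m, s (m + 1) = ℓ * s m - s (m - 1)) (m : ℤ) :
    !![-ℓ, 1; -1, 0] * seqMatrix s m = -seqMatrix s (m + 1) := by
  have h₂ := hrec (m + 1)
  rw [add_sub_cancel_right] at h₂
  ext i j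
  fin_cases i <;> fin_cases j <;> simp [seqMatrix, Matrix.mul_apply, Fin.sum_univ_two]
  · linear_combination hrec m
  · linear_combination h₂

theorem zpow_mul_seqMatrix_zero_of_recurrence {ℓ : R} {s : ℤ → R}
    (hrec : ∀ m, s (m + 1) = ℓ * s m - s (m - 1)) (k : ℤ) :
    !![-ℓ, 1; -1, 0] ^ k * seqMatrix s 0 = k.negOnePow • seqMatrix s k := by
  set A : Matrix (Fin 2) (Fin 2) R := !![-ℓ, 1; -1, 0]
  have hA : IsUnit A.det := by simp [A, Matrix.det_fin_two_of]
  have hstep (m : ℤ) : A * (m.negOnePow • seqMatrix s m) =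
      (m + 1).negOnePow • seqMatrix s (m + 1) := by
    rw [mul_smul_comm, mul_seqMatrix_of_recurrence hrec, Int.negOnePow_succ, smul_neg,
      Units.neg_smul]
  induction k using Int.induction_on with
  | zero => simp
  | succ k ih => rw [add_comm, Matrix.zpow_one_add hA, mul_assoc, ih, hstep, add_comm]
  | pred k ih =>
    have h := hstep (-k - 1)
    rw [sub_add_cancel] at h
    rw [sub_eq_neg_add, Matrix.zpow_add hA, Matrix.zpow_neg_one, mul_assoc, ih, ← h,
      ← mul_assoc, Matrix.nonsing_inv_mul A hA, one_mul, neg_add_eq_sub]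

end ThreeTermRecurrence

noncomputable def sinRatio (θ : ℝ) (m : ℤ) : ℝ :=
  Real.sin (m * θ) / Real.sin θ

theorem sinRatio_add_one (θ : ℝ) (m : ℤ) :
    sinRatio θ (m + 1) = 2 * Real.cos θ * sinRatio θ m - sinRatio θ (m - 1) := by
  have h : Real.sin ((m + 1 : ℤ) * θ) + Real.sin ((m - 1 : ℤ) * θ) =
      2 * Real.cos θ * Real.sin (m * θ) := by
    push_cast
    rw [add_mul, sub_mul, one_mul, Real.sin_add, Real.sin_sub]
    ring
  simp only [sinRatio]
  rw [eq_sub_iff_add_eq, ← add_div, h, mul_div_assoc]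

theorem seqMatrix_sinRatio_zero {θ : ℝ} (hθ : Real.sin θ ≠ 0) :
    seqMatrix (sinRatio θ) 0 = !![0, 1; -1, 0] := by
  simp [seqMatrix, sinRatio, hθ]

theorem sin_pi_div_ne_zero {q : ℕ} (hq : 2 ≤ q) : Real.sin (Real.pi / q) ≠ 0 := by
  have hq' : (1 : ℝ) < q := by exact_mod_cast hq
  exact (Real.sin_pos_of_pos_of_lt_pi (by positivity) (div_lt_self Real.pi_pos hq')).ne'

/-- For every integer `k`, the matrix `(T S)^k S` (i.e. the inverse of
`g_{q,k} = ((T S)^k S)⁻¹`), regarded in `SL₂(ℝ)` up to sign, equals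
`[[s k, s (k+1)], [s (k-1), s k]]` where `s m = sin(mπ/q)/sin(π/q)`. -/
theorem stmt0 (q : ℕ) (hq : 3 ≤ q)
    (ℓ : ℝ) (hℓ : ℓ = 2 * Real.cos (Real.pi / q))
    (S T : Matrix.SpecialLinearGroup (Fin 2) ℝ)
    (hS : (S : Matrix (Fin 2) (Fin 2) ℝ) = !![0, 1; -1, 0])
    (hT : (T : Matrix (Fin 2) (Fin 2) ℝ) = !![1, ℓ; 0, 1])
    (s : ℤ → ℝ) (hs : ∀ m : ℤ, s m = Real.sin (m * Real.pi / q) / Real.sin (Real.pi / q))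
    (k : ℤ) :
    ((((T * S) ^ k * S)⁻¹)⁻¹ : Matrix (Fin 2) (Fin 2) ℝ)
        = !![s k, s (k + 1); s (k - 1), s k] ∨
    ((((T * S) ^ k * S)⁻¹)⁻¹ : Matrix (Fin 2) (Fin 2) ℝ)
        = -!![s k, s (k + 1); s (k - 1), s k] := by
  obtain rfl : s = sinRatio (Real.pi / q) :=
    funext fun m => by rw [hs, sinRatio, mul_div_assoc]
  have hdet : IsUnit (((T : Matrix (Fin 2) (Fin 2) ℝ) * S) ^ k * S).det := by
    have hTS_det : IsUnit ((T : Matrix (Fin 2) (Fin 2) ℝ) * S).det := by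
      rw [Matrix.det_mul, T.prop, S.prop, one_mul]
      exact isUnit_one
    rw [Matrix.det_mul, S.prop, mul_one]
    exact hTS_det.det_zpow k
  have hTS : (T : Matrix (Fin 2) (Fin 2) ℝ) * S = !![-ℓ, 1; -1, 0] := by
    rw [hT, hS, Matrix.mul_fin_two]
    simp
  have hS' : (S : Matrix (Fin 2) (Fin 2) ℝ) = seqMatrix (sinRatio (Real.pi / q)) 0 := by
    rw [hS, seqMatrix_sinRatio_zero (sin_pi_div_ne_zero (by omega))]
  have hrec (m : ℤ) := hℓ ▸ sinRatio_add_one (Real.pi / q) m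
  rw [Matrix.nonsing_inv_nonsing_inv _ hdet, hTS, hS', zpow_mul_seqMatrix_zero_of_recurrence hrec]
  rcases k.even_or_odd with hk | hk
  · left
    rw [Int.negOnePow_even _ hk, one_smul, seqMatrix]
  · right
    rw [Int.negOnePow_odd _ hk, Units.neg_smul, one_smul, seqMatrix]
end

section
/- Let t ≠ 0 be a real number and ℓ > 0. Then limsup over x → ∞ and k → ∞ of |x^{it} − (x + kℓ)^{it}| equals 2; in particular, it does not converge to 0. Consequently, if c ∈ ℂ and a function F : (1,∞) → ℂ satisfies F(x+ℓ) = F(x) for all x and F(x) = c x^{it} + O(x^{−1/2}) as x → ∞, then c = 0. -/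
/-!
Multiplying `x` by `e^{π/|t|}` turns `x^{it}` into its antipode `-x^{it}`, and for every large `k`
the point `x = kℓ / (e^{π/|t|} - 1)` satisfies `x + kℓ = x e^{π/|t|}`; this gives arbitrarily large
`x` and `k` with `|x^{it} - (x+kℓ)^{it}| = 2`. For the last claim, `g(x) = F(x) - c x^{it}` tends
to `0`, while periodicity gives `c (x^{it} - (x+kℓ)^{it}) = g(x+kℓ) - g(x)` at those points,
so `2|c|` is arbitrarily small.
-/

open Filter Real

lemma norm_exp_I_mul_mul_log (t x : ℝ) : ‖Complex.exp (Complex.I * t * Real.log x)‖ = 1 := by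
  simpa only [mul_assoc, Complex.ofReal_mul] using Complex.norm_exp_I_mul_ofReal (t * Real.log x)

lemma norm_exp_I_mul_mul_log_sub_le_two (t x y : ℝ) :
    ‖Complex.exp (Complex.I * t * Real.log x) - Complex.exp (Complex.I * t * Real.log y)‖ ≤ 2 :=
  (norm_sub_le _ _).trans_eq <| by rw [norm_exp_I_mul_mul_log, norm_exp_I_mul_mul_log]; norm_num

lemma exp_I_mul_mul_pi_div_abs {t : ℝ} (ht : t ≠ 0) :
    Complex.exp (Complex.I * t * (π / |t| : ℝ)) = -1 := by
  have ht' : (t : ℂ) ≠ 0 := mod_cast ht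
  rcases ht.lt_or_gt with ht | ht
  · rw [abs_of_neg ht, ← Complex.exp_neg_pi_mul_I]
    congr 1
    push_cast
    field_simp
  · rw [abs_of_pos ht, ← Complex.exp_pi_mul_I]
    congr 1
    push_cast
    field_simp

lemma exp_I_mul_mul_log_mul_exp_pi_div_abs {t x : ℝ} (ht : t ≠ 0) (hx : 0 < x) :
    Complex.exp (Complex.I * t * Real.log (x * Real.exp (π / |t|)))
      = -Complex.exp (Complex.I * t * Real.log x) := by
  rw [Real.log_mul hx.ne' (Real.exp_ne_zero _), Real.log_exp, Complex.ofReal_add, mul_add,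
    Complex.exp_add, exp_I_mul_mul_pi_div_abs ht, mul_neg_one]

lemma exists_add_nat_mul_eq_mul {r ℓ : ℝ} (hr : 1 < r) (hℓ : 0 < ℓ) (x₀ : ℝ) (k₀ : ℕ) :
    ∃ x : ℝ, x₀ ≤ x ∧ ∃ k : ℕ, k₀ ≤ k ∧ x + k * ℓ = x * r := by
  obtain ⟨m, hm⟩ := exists_nat_ge (x₀ * (r - 1) / ℓ)
  have hr' : 0 < r - 1 := sub_pos.mpr hr
  refine ⟨max k₀ m * ℓ / (r - 1), ?_, max k₀ m, le_max_left _ _, by field_simp; ring⟩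
  rw [le_div_iff₀ hr', ← div_le_iff₀ hℓ]
  exact hm.trans (mod_cast le_max_right _ _)

lemma exists_norm_exp_I_mul_mul_log_sub_eq_two {t ℓ : ℝ} (ht : t ≠ 0) (hℓ : 0 < ℓ)
    (x₀ : ℝ) (k₀ : ℕ) :
    ∃ x : ℝ, x₀ ≤ x ∧ ∃ k : ℕ, k₀ ≤ k ∧
      ‖Complex.exp (Complex.I * t * Real.log x)
        - Complex.exp (Complex.I * t * Real.log (x + k * ℓ))‖ = 2 := by
  have hr : 1 < Real.exp (π / |t|) := Real.one_lt_exp_iff.mpr (by positivity)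
  obtain ⟨x, hx, k, hk, hxk⟩ := exists_add_nat_mul_eq_mul hr hℓ (max x₀ 1) k₀
  have hx0 : 0 < x := one_pos.trans_le ((le_max_right _ _).trans hx)
  refine ⟨x, (le_max_left _ _).trans hx, k, hk, ?_⟩
  rw [hxk, exp_I_mul_mul_log_mul_exp_pi_div_abs ht hx0, sub_neg_eq_add, ← two_mul, norm_mul,
    norm_exp_I_mul_mul_log, Complex.norm_two, mul_one]

lemma apply_add_nat_mul_eq_of_apply_add_eq {F : ℝ → ℂ} {a ℓ : ℝ} (hℓ : 0 ≤ ℓ)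
    (hper : ∀ x, a < x → F (x + ℓ) = F x) (n : ℕ) {x : ℝ} (hx : a < x) :
    F (x + n * ℓ) = F x := by
  induction n with
  | zero => simp
  | succ n ih =>
    rw [Nat.cast_succ, add_one_mul, ← add_assoc,
      hper _ (hx.trans_le (le_add_of_nonneg_right (by positivity))), ih]

lemma eq_zero_of_periodic_of_tendsto_sub {t ℓ : ℝ} (ht : t ≠ 0) (hℓ : 0 < ℓ) {c : ℂ}
    {F : ℝ → ℂ} (hper : ∀ x : ℝ, 1 < x → F (x + ℓ) = F x)
    (hlim : Tendsto (fun x : ℝ => F x - c * Complex.exp (Complex.I * t * Real.log x))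
      atTop (nhds 0)) :
    c = 0 := by
  set g := fun x : ℝ => F x - c * Complex.exp (Complex.I * t * Real.log x)
  refine norm_le_zero_iff.mp <| le_of_forall_pos_lt_add fun ε hε => ?_
  obtain ⟨N, hN⟩ := Metric.tendsto_atTop.mp hlim ε hε
  obtain ⟨x, hx, k, -, hnorm⟩ := exists_norm_exp_I_mul_mul_log_sub_eq_two ht hℓ (max N 2) 0
  have hxN : N ≤ x := (le_max_left _ _).trans hx
  have hxk : x ≤ x + k * ℓ := le_add_of_nonneg_right (by positivity)
  have hF : F (x + k * ℓ) = F x := apply_add_nat_mul_eq_of_apply_add_eq hℓ.le hper k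
    (one_lt_two.trans_le ((le_max_right _ _).trans hx))
  have hdiff : ‖c‖ * 2 = ‖g (x + k * ℓ) - g x‖ := by
    rw [← hnorm, ← norm_mul]
    congr 1
    simp only [g, hF]
    ring
  have hgx := hN x hxN
  have hgy := hN _ (hxN.trans hxk)
  rw [dist_zero_right] at hgx hgy
  linarith [norm_sub_le (g (x + k * ℓ)) (g x)]

/-- For `t ≠ 0`, `ℓ > 0` the quantity `|x^{it} − (x+kℓ)^{it}|` (with
`x^{it} = exp(it log x)`) is at most `2` but does not tend to `0` as
`x → ∞`, `k → ∞`: its limsup equals `2`.  Consequently, if `F : (1,∞) → ℂ`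
is `ℓ`-periodic and `F(x) = c x^{it} + O(x^{−1/2})` as `x → ∞`, then `c = 0`. -/
theorem stmt8 (t ℓ : ℝ) (ht : t ≠ 0) (hℓ : 0 < ℓ) (c : ℂ) (F : ℝ → ℂ)
    (hper : ∀ x : ℝ, 1 < x → F (x + ℓ) = F x)
    (hasymp : (fun x : ℝ => F x - c * Complex.exp (Complex.I * t * Real.log x))
      =O[atTop] fun x : ℝ => x ^ (-(1 : ℝ) / 2)) :
    (∀ x k : ℝ, 0 < x →
        ‖Complex.exp (Complex.I * t * Real.log x)
          - Complex.exp (Complex.I * t * Real.log (x + k * ℓ))‖ ≤ 2) ∧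
    (∀ ε : ℝ, 0 < ε → ∀ x₀ : ℝ, ∀ k₀ : ℕ, ∃ x : ℝ, x₀ ≤ x ∧ ∃ k : ℕ, k₀ ≤ k ∧
        2 - ε < ‖Complex.exp (Complex.I * t * Real.log x)
          - Complex.exp (Complex.I * t * Real.log (x + k * ℓ))‖) ∧
    c = 0 := by
  refine ⟨fun x k _ => norm_exp_I_mul_mul_log_sub_le_two t x (x + k * ℓ), fun ε hε x₀ k₀ => ?_,
    eq_zero_of_periodic_of_tendsto_sub ht hℓ hper ?_⟩
  · obtain ⟨x, hx, k, hk, h2⟩ := exists_norm_exp_I_mul_mul_log_sub_eq_two ht hℓ x₀ k₀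
    exact ⟨x, hx, k, hk, h2 ▸ sub_lt_self 2 hε⟩
  · refine hasymp.trans_tendsto ?_
    simpa only [neg_div] using tendsto_rpow_neg_atTop (one_half_pos (α := ℝ))
end

section
/- Let s ∈ ℂ and let Q_0 : (0,∞) → ℂ satisfy the invariance Q_0(x) = (ℓx+1)^{−2s} Q_0(x/(ℓx+1)) for all x > 0 (invariance under α_s(g_{−1}) with g_{−1}.x = x/(ℓx+1)), and suppose Q_0(x) = o(x^{−2Re s}) as x → 0^+. Then Q_0 ≡ 0. -/
/-!
The weight-`s` action preserves `‖Q x‖ / x ^ (-2 Re s)`, because `|(ℓx+1)^{-2s}| = (ℓx+1)^{-2 Re s}`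
and `x ↦ x ^ (-2 Re s)` transforms by the same factor. This ratio is therefore constant on the
orbit `gⁿ.x = x/(nℓx+1)`, which tends to `0⁺`, where the ratio tends to `0` by the little-o hypothesis.
-/

open Filter Real Complex Topology

/-- `α_s(g) Q = Q` on `(0,∞)` for `g x = x/(ℓx+1)`. -/
def IsWeightInvariant (ℓ : ℝ) (s : ℂ) (Q : ℝ → ℂ) : Prop :=
  ∀ x : ℝ, 0 < x → Q x = ((ℓ * x + 1 : ℝ) : ℂ) ^ (-(2 * s)) * Q (x / (ℓ * x + 1))

namespace IsWeightInvariant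

variable {s : ℂ} {Q : ℝ → ℂ}

theorem zero : IsWeightInvariant 0 s Q := fun x _ => by simp

/-- The weight factor is a cocycle: `(ℓ₁x+1)(ℓ₂y+1) = (ℓ₁+ℓ₂)x+1` for `y = x/(ℓ₁x+1)`. -/
theorem add {ℓ₁ ℓ₂ : ℝ} (hℓ₁ : 0 ≤ ℓ₁) (hℓ₂ : 0 ≤ ℓ₂) (h₁ : IsWeightInvariant ℓ₁ s Q)
    (h₂ : IsWeightInvariant ℓ₂ s Q) : IsWeightInvariant (ℓ₁ + ℓ₂) s Q := by
  intro x hx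
  have hc₁ : 0 < ℓ₁ * x + 1 := by positivity
  have hy : 0 < x / (ℓ₁ * x + 1) := by positivity
  have hfactor : ℓ₂ * (x / (ℓ₁ * x + 1)) + 1 = ((ℓ₁ + ℓ₂) * x + 1) / (ℓ₁ * x + 1) := by
    field_simp; ring
  have hpoint : x / (ℓ₁ * x + 1) / (((ℓ₁ + ℓ₂) * x + 1) / (ℓ₁ * x + 1))
      = x / ((ℓ₁ + ℓ₂) * x + 1) := by
    field_simp
  have hcocycle : (ℓ₁ * x + 1) * (((ℓ₁ + ℓ₂) * x + 1) / (ℓ₁ * x + 1)) = (ℓ₁ + ℓ₂) * x + 1 := by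
    field_simp
  rw [h₁ x hx, h₂ _ hy, hfactor, hpoint, ← mul_assoc,
    ← mul_cpow_ofReal_nonneg hc₁.le (by positivity), ← ofReal_mul, hcocycle]

theorem nat_mul {ℓ : ℝ} (hℓ : 0 ≤ ℓ) (h : IsWeightInvariant ℓ s Q) (n : ℕ) :
    IsWeightInvariant (n * ℓ) s Q := by
  induction n with
  | zero => simpa using zero
  | succ n ih => simpa [add_mul] using add (mul_nonneg n.cast_nonneg hℓ) hℓ ih h

theorem norm_div_rpow_eq {ℓ : ℝ} (hℓ : 0 ≤ ℓ) (h : IsWeightInvariant ℓ s Q) {x : ℝ}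
    (hx : 0 < x) :
    ‖Q (x / (ℓ * x + 1))‖ / (x / (ℓ * x + 1)) ^ (-(2 * s.re))
      = ‖Q x‖ / x ^ (-(2 * s.re)) := by
  have hc : 0 < ℓ * x + 1 := by positivity
  have hre : (-(2 * s)).re = -(2 * s.re) := by simp
  rw [h x hx, norm_mul, norm_cpow_eq_rpow_re_of_pos hc, hre, div_rpow hx.le hc.le]
  field_simp

end IsWeightInvariant

theorem tendsto_div_nat_mul_mul_add_one {ℓ x : ℝ} (hℓ : 0 < ℓ) (hx : 0 < x) :
    Tendsto (fun n : ℕ => x / (n * ℓ * x + 1)) atTop (𝓝[>] 0) := by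
  refine tendsto_nhdsWithin_of_tendsto_nhds_of_eventually_within _ ?_
    (Eventually.of_forall fun _ => Set.mem_Ioi.mpr (by positivity))
  refine tendsto_const_nhds.div_atTop (tendsto_atTop_add_const_right _ 1 ?_)
  exact (tendsto_natCast_atTop_atTop.atTop_mul_const hℓ).atTop_mul_const hx

/-- If `Q₀ : (0,∞) → ℂ` is invariant under the weight-`s` action of
`g : x ↦ x/(ℓx+1)`, i.e. `Q₀(x) = (ℓx+1)^{−2s} Q₀(x/(ℓx+1))`, and
`Q₀(x) = o(x^{−2 Re s})` as `x → 0⁺`, then `Q₀ ≡ 0` on `(0,∞)`. -/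
theorem stmt10 (ℓ : ℝ) (hℓ : 0 < ℓ) (s : ℂ) (Q₀ : ℝ → ℂ)
    (hinv : ∀ x : ℝ, 0 < x →
      Q₀ x = ((ℓ * x + 1 : ℝ) : ℂ) ^ (-(2 * s)) * Q₀ (x / (ℓ * x + 1)))
    (hlittleo : (fun x : ℝ => Q₀ x)
      =o[nhdsWithin 0 (Set.Ioi 0)] fun x : ℝ => x ^ (-(2 * s.re))) :
    ∀ x : ℝ, 0 < x → Q₀ x = 0 := by
  intro x hx
  have hQ : IsWeightInvariant ℓ s Q₀ := hinv
  have hratio : Tendsto (fun y => ‖Q₀ y‖ / y ^ (-(2 * s.re))) (𝓝[>] 0) (𝓝 0) :=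
    hlittleo.norm_left.tendsto_div_nhds_zero
  have horbit := hratio.comp (tendsto_div_nat_mul_mul_add_one hℓ hx)
  have hconst : (fun y => ‖Q₀ y‖ / y ^ (-(2 * s.re))) ∘ (fun n : ℕ => x / (n * ℓ * x + 1))
      = fun _ => ‖Q₀ x‖ / x ^ (-(2 * s.re)) :=
    funext fun n => (hQ.nat_mul hℓ.le n).norm_div_rpow_eq (by positivity) hx
  rw [hconst, tendsto_const_nhds_iff, div_eq_zero_iff, norm_eq_zero] at horbit
  exact horbit.resolve_right (rpow_pos_of_pos hx _).ne'
end
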